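/- arXiv:math/0410022 — 5 statements merged into one kernel-verified Lean document; each statement's English description precedes it below -/
import Mathlib

section
/- Let h be a C¹ real function with h(0) = 0 and 1 + h(X) > 0 near 0. The unique solution of the differential equation (1 + h(X) − h'(X)·X)/(1 + h(X))³ = 1 with boundary condition h(0) = 0 is h ≡ 0. -/
/-!
Along a solution, `u = 1 + h` satisfies `u - X u' = u³`, so `F(X) = X² / u(X)² - X²` has
`F' = 2X (u - X u') / u³ - 2X = 0`. Hence `F` is constant on the interval, equal to `F 0 = 0`,
which for `X ≠ 0` means `u(X)² = 1`, i.e. `u(X) = 1` by positivity.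
-/

noncomputable def urabeFirstIntegral (h : ℝ → ℝ) (X : ℝ) : ℝ :=
  X ^ 2 / (1 + h X) ^ 2 - X ^ 2

theorem hasDerivAt_urabeFirstIntegral {h : ℝ → ℝ} {h' x : ℝ} (hd : HasDerivAt h h' x)
    (hx : 1 + h x ≠ 0) (hode : (1 + h x - h' * x) / (1 + h x) ^ 3 = 1) :
    HasDerivAt (urabeFirstIntegral h) 0 x := by
  have hu : HasDerivAt (fun y => (1 + h y) ^ 2) (2 * (1 + h x) * h') x := by
    simpa [mul_comm] using (hd.const_add 1).fun_pow 2
  have hsq : HasDerivAt (fun y : ℝ => y ^ 2) (2 * x) x := by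
    simpa using hasDerivAt_pow 2 x
  have hode' : 1 + h x - h' * x = (1 + h x) ^ 3 := by
    rwa [div_eq_one_iff_eq (pow_ne_zero 3 hx)] at hode
  refine ((hsq.div hu (pow_ne_zero 2 hx)).sub hsq).congr_deriv ?_
  field_simp
  linear_combination (2 * x) * hode'

theorem eq_one_of_urabeFirstIntegral_eq_zero {h : ℝ → ℝ} {X : ℝ} (hX : X ≠ 0)
    (hpos : 0 < 1 + h X) (hF : urabeFirstIntegral h X = 0) : 1 + h X = 1 := by
  have hsq : (1 + h X) ^ 2 = 1 := by
    unfold urabeFirstIntegral at hF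
    rw [sub_eq_zero, div_eq_iff (by positivity)] at hF
    exact (mul_right_eq_self₀.mp hF.symm).resolve_right (pow_ne_zero 2 hX)
  nlinarith

theorem urabe_ode_trivial_solution_general (h : ℝ → ℝ) (hC1 : ContDiff ℝ 1 h)
    (ε : ℝ) (h0 : h 0 = 0)
    (hpos : ∀ X ∈ Set.Ioo (-ε) ε, 1 + h X > 0)
    (hode : ∀ X ∈ Set.Ioo (-ε) ε,
      (1 + h X - deriv h X * X) / (1 + h X)^3 = 1) :
    ∀ X ∈ Set.Ioo (-ε) ε, h X = 0 := by
  intro X hX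
  rcases eq_or_ne X 0 with rfl | hX0
  · exact h0
  have hderiv : ∀ x ∈ Set.Ioo (-ε) ε, HasDerivAt (urabeFirstIntegral h) 0 x := fun x hx =>
    hasDerivAt_urabeFirstIntegral ((hC1.differentiable one_ne_zero x).hasDerivAt)
      (hpos x hx).ne' (hode x hx)
  have hmem0 : (0 : ℝ) ∈ Set.Ioo (-ε) ε := by
    constructor <;> linarith [hX.1, hX.2]
  have hF : urabeFirstIntegral h X = urabeFirstIntegral h 0 :=
    isOpen_Ioo.is_const_of_deriv_eq_zero isPreconnected_Ioo
      (fun x hx => (hderiv x hx).differentiableAt.differentiableWithinAt)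
      (fun x hx => (hderiv x hx).deriv) hX hmem0
  have hF0 : urabeFirstIntegral h 0 = 0 := by simp [urabeFirstIntegral]
  linarith [eq_one_of_urabeFirstIntegral_eq_zero hX0 (hpos X hX) (hF.trans hF0)]

/-- The unique `C¹` solution of `(1 + h(X) - h'(X)·X)/(1 + h(X))³ = 1` near `0`
with `h(0) = 0` and `1 + h > 0` is `h ≡ 0`. -/
theorem urabe_ode_trivial_solution (h : ℝ → ℝ) (hC1 : ContDiff ℝ 1 h)
    (ε : ℝ) (hε : 0 < ε) (h0 : h 0 = 0)
    (hpos : ∀ X ∈ Set.Ioo (-ε) ε, 1 + h X > 0)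
    (hode : ∀ X ∈ Set.Ioo (-ε) ε,
      (1 + h X - deriv h X * X) / (1 + h X)^3 = 1) :
    ∀ X ∈ Set.Ioo (-ε) ε, h X = 0 :=
  urabe_ode_trivial_solution_general h hC1 ε h0 hpos hode
end

section
/- Let g̃(u) = X/(1 + h(X)) where u = X + H(X), H'(X) = h(X), h is C³ with h(0) = 0 and 1 + h > 0 near 0. Then g̃'(0) = 1, g̃''(0) = −3h'(0), and g̃'''(0) = −4h''(0) + 15h'(0)². -/
/-!
The map `φ X = X + H X` is `C³` with `φ'(0) = 1`, so by the inverse function theorem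
`g̃ = p ∘ φ⁻¹` is `C³` at `0`, where `p X = X / (1 + h X)`. The derivatives of `p` at `0`
follow from the Leibniz rule applied to `p · (1 + h) = id`, and Faà di Bruno's formula for
`g̃ ∘ φ = p` then gives a triangular linear system for `g̃'(0)`, `g̃''(0)`, `g̃'''(0)`.
-/

open Filter Topology

theorem ContDiffAt.of_comp_of_hasFDerivAt_equiv {𝕂 E F G : Type*} [RCLike 𝕂]
    [NormedAddCommGroup E] [NormedSpace 𝕂 E] [CompleteSpace E]
    [NormedAddCommGroup F] [NormedSpace 𝕂 F] [NormedAddCommGroup G] [NormedSpace 𝕂 G]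
    {n : WithTop ℕ∞} {φ : E → F} {φ' : E ≃L[𝕂] F} {g : F → G} {a : E}
    (hgφ : ContDiffAt 𝕂 n (g ∘ φ) a) (hφ : ContDiffAt 𝕂 n φ a)
    (hφ' : HasFDerivAt φ (φ' : E →L[𝕂] F) a) (hn : n ≠ 0) :
    ContDiffAt 𝕂 n g (φ a) := by
  set ψ := hφ.localInverse hφ' hn
  have hψ : ContDiffAt 𝕂 n ψ (φ a) := hφ.to_localInverse hφ' hn
  have hψφ : ψ (φ a) = a := hφ.localInverse_apply_image hφ' hn
  have hg : (g ∘ φ) ∘ ψ =ᶠ[𝓝 (φ a)] g :=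
    (hφ.hasStrictFDerivAt' hφ' hn).eventually_right_inverse.mono fun _ hy => congrArg g hy
  exact ((hψφ ▸ hgφ).comp (φ a) hψ).congr_of_eventuallyEq hg.symm

theorem iteratedDeriv_id_div_at_zero {𝕜 : Type*} [NontriviallyNormedField 𝕜]
    {q : 𝕜 → 𝕜} (hq : ContDiffAt 𝕜 3 q 0) (hq0 : q 0 = 1) :
    deriv (fun x => x / q x) 0 = 1 ∧
    iteratedDeriv 2 (fun x => x / q x) 0 = -2 * deriv q 0 ∧
    iteratedDeriv 3 (fun x => x / q x) 0 =
      6 * deriv q 0 ^ 2 - 3 * iteratedDeriv 2 q 0 := by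
  set p : 𝕜 → 𝕜 := fun x => x / q x
  have hp : ContDiffAt 𝕜 3 p 0 := contDiffAt_id.div hq (by simp [hq0])
  have hpq : p * q =ᶠ[𝓝 0] fun x => x := by
    filter_upwards [hq.continuousAt.eventually_ne (y := 0) (by simp [hq0])] with x hx
    exact div_mul_cancel₀ x hx
  have leibniz : ∀ k ≤ 3, iteratedDeriv k (fun x => x) (0 : 𝕜) =
      ∑ i ∈ Finset.range (k + 1),
        k.choose i * iteratedDeriv i p 0 * iteratedDeriv (k - i) q 0 :=
    fun k hk => (hpq.iteratedDeriv_eq k).symm.trans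
      (iteratedDeriv_mul (hp.of_le (by exact_mod_cast hk)) (hq.of_le (by exact_mod_cast hk)))
  have hp0 : p 0 = 0 := by simp [p]
  have hp1 : deriv p 0 = 1 := by
    simpa [Finset.sum_range_succ, hq0, hp0] using (leibniz 1 le_add_self).symm
  have e2 : 0 = 2 * deriv q 0 + iteratedDeriv 2 p 0 := by
    simpa [Finset.sum_range_succ, iteratedDeriv_fun_id_zero, hq0, hp0, hp1] using
      leibniz 2 (by norm_num)
  have e3 : 0 = 3 * iteratedDeriv 2 q 0 + 3 * iteratedDeriv 2 p 0 * deriv q 0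
      + iteratedDeriv 3 p 0 := by
    simpa [Finset.sum_range_succ, iteratedDeriv_fun_id_zero, hq0, hp0, hp1] using leibniz 3 le_rfl
  have hp2 : iteratedDeriv 2 p 0 = -2 * deriv q 0 := by linear_combination -e2
  exact ⟨hp1, hp2, by linear_combination -e3 - 3 * deriv q 0 * hp2⟩

section Antiderivative

variable {𝕜 : Type*} [NontriviallyNormedField 𝕜] {H h : 𝕜 → 𝕜}

theorem deriv_id_add_of_hasDerivAt (hH : ∀ x, HasDerivAt H (h x) x) :
    deriv (fun x => x + H x) = fun x => 1 + h x :=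
  funext fun x => ((hasDerivAt_id x).add (hH x)).deriv

theorem contDiff_id_add_of_hasDerivAt (hH : ∀ x, HasDerivAt H (h x) x) {n : ℕ}
    (hh : ContDiff 𝕜 n h) : ContDiff 𝕜 (n + 1) (fun x => x + H x) := by
  refine contDiff_succ_iff_deriv.2
    ⟨fun x => ((hasDerivAt_id x).add (hH x)).differentiableAt, by simp, ?_⟩
  rw [deriv_id_add_of_hasDerivAt hH]
  exact contDiff_const.add hh

theorem iteratedDeriv_id_add_of_hasDerivAt (hH : ∀ x, HasDerivAt H (h x) x) (n : ℕ) :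
    iteratedDeriv (n + 2) (fun x => x + H x) = iteratedDeriv (n + 1) h := by
  ext x
  rw [iteratedDeriv_succ', deriv_id_add_of_hasDerivAt hH, iteratedDeriv_const_add n.succ_pos]

end Antiderivative

theorem urabe_gtilde_derivatives_general (h H gt : ℝ → ℝ) (hC3 : ContDiff ℝ 3 h)
    (ε : ℝ) (hε : 0 < ε) (h0 : h 0 = 0) (H0 : H 0 = 0)
    (hH : ∀ X : ℝ, HasDerivAt H (h X) X)
    (hgt : ∀ X ∈ Set.Ioo (-ε) ε, gt (X + H X) = X / (1 + h X)) :
    deriv gt 0 = 1 ∧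
    iteratedDeriv 2 gt 0 = -3 * deriv h 0 ∧
    iteratedDeriv 3 gt 0 = -4 * iteratedDeriv 2 h 0 + 15 * (deriv h 0)^2 := by
  set φ : ℝ → ℝ := fun X => X + H X
  have hφ : ContDiff ℝ 3 φ :=
    contDiff_id_add_of_hasDerivAt hH (n := 2) (hC3.of_le (by norm_num))
  have hφ0 : φ 0 = 0 := by simp [φ, H0]
  have hφ1 : deriv φ 0 = 1 := by simp [φ, deriv_id_add_of_hasDerivAt hH, h0]
  have hφ2 : iteratedDeriv 2 φ 0 = deriv h 0 := by
    rw [iteratedDeriv_id_add_of_hasDerivAt hH 0, iteratedDeriv_one]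
  have hφ3 : iteratedDeriv 3 φ 0 = iteratedDeriv 2 h 0 :=
    congrFun (iteratedDeriv_id_add_of_hasDerivAt hH 1) 0
  have hφ' : HasDerivAt φ 1 0 := hφ1 ▸ (hφ.differentiable (by norm_num) 0).hasDerivAt
  have hq : ContDiffAt ℝ 3 (fun X => 1 + h X) 0 := (contDiff_const.add hC3).contDiffAt
  have hcomp : gt ∘ φ =ᶠ[𝓝 0] fun X => X / (1 + h X) :=
    eventually_of_mem (Ioo_mem_nhds (neg_neg_of_pos hε) hε) hgt
  have hgtφ : ContDiffAt ℝ 3 (gt ∘ φ) 0 :=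
    (contDiffAt_id.div hq (by simp [h0])).congr_of_eventuallyEq hcomp
  have hgt3 : ContDiffAt ℝ 3 gt (φ 0) := hgtφ.of_comp_of_hasFDerivAt_equiv hφ.contDiffAt
    (hφ'.hasFDerivAt_equiv one_ne_zero) three_ne_zero
  obtain ⟨p1, p2, p3⟩ := iteratedDeriv_id_div_at_zero hq (by simp [h0])
  rw [deriv_const_add] at p2 p3
  rw [iteratedDeriv_const_add two_pos] at p3
  have c1 := deriv_comp 0 (hgt3.differentiableAt (by norm_num)) hφ'.differentiableAt
  have c2 := iteratedDeriv_comp_two (hgt3.of_le (by norm_num)) (hφ.contDiffAt.of_le (by norm_num))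
  have c3 := iteratedDeriv_comp_three hgt3 hφ.contDiffAt
  rw [hcomp.deriv_eq, p1, hφ0, hφ1] at c1
  rw [hcomp.iteratedDeriv_eq, p2, hφ0, hφ1, hφ2] at c2
  rw [hcomp.iteratedDeriv_eq, p3, hφ0, hφ1, hφ2, hφ3] at c3
  have d1 : deriv gt 0 = 1 := by linear_combination -c1
  have d2 : iteratedDeriv 2 gt 0 = -3 * deriv h 0 := by linear_combination -c2 + deriv h 0 * c1
  exact ⟨d1, d2, by linear_combination -c3 + iteratedDeriv 2 h 0 * c1 - 3 * deriv h 0 * d2⟩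

/-- If `g̃(u) = X/(1 + h(X))` under the change of variable `u = X + H(X)`, with
`H' = h`, `h(0) = H(0) = 0`, `h` of class `C³` and `1 + h > 0` near `0`, then
`g̃'(0) = 1`, `g̃''(0) = -3h'(0)` and `g̃'''(0) = -4h''(0) + 15h'(0)²`. -/
theorem urabe_gtilde_derivatives (h H gt : ℝ → ℝ) (hC3 : ContDiff ℝ 3 h)
    (ε : ℝ) (hε : 0 < ε) (h0 : h 0 = 0) (H0 : H 0 = 0)
    (hH : ∀ X : ℝ, HasDerivAt H (h X) X)
    (hpos : ∀ X ∈ Set.Ioo (-ε) ε, 1 + h X > 0)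
    (hgt : ∀ X ∈ Set.Ioo (-ε) ε, gt (X + H X) = X / (1 + h X)) :
    deriv gt 0 = 1 ∧
    iteratedDeriv 2 gt 0 = -3 * deriv h 0 ∧
    iteratedDeriv 3 gt 0 = -4 * iteratedDeriv 2 h 0 + 15 * (deriv h 0)^2 :=
  urabe_gtilde_derivatives_general h H gt hC3 ε hε h0 H0 hH hgt
end

section
/- Under the hypotheses of the previous derivative computation, 5·g̃''(0)² − 3·g̃'(0)·g̃'''(0) = 12·h''(0). -/
/-!
Near `0` we have `g̃ ∘ u = X / w` with `w = 1 + h = u'`. As `u'(0) = 1`, the inverse function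
theorem makes `g̃` of class `C³` at `0`. Faà di Bruno's formula then expresses the derivatives
of `g̃ ∘ u` at `0` through those of `g̃` and of `u` (`u'' = h'`, `u''' = h''`), while Leibniz'
rule applied to `(X / w) · w = X` computes those of `X / w`. Comparing gives `g̃'(0) = 1`,
`g̃''(0) = -3 h'(0)` and `g̃'''(0) = 15 h'(0)² - 4 h''(0)`, and the `h'(0)²` terms cancel in
`5 g̃''(0)² - 3 g̃'(0) g̃'''(0)`.
-/

open Filter Topology

theorem contDiffAt_of_comp_eventuallyEq {𝕂 E F G : Type*} [RCLike 𝕂]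
    [NormedAddCommGroup E] [NormedSpace 𝕂 E] [CompleteSpace E]
    [NormedAddCommGroup F] [NormedSpace 𝕂 F] [NormedAddCommGroup G] [NormedSpace 𝕂 G]
    {n : WithTop ℕ∞} {u : E → F} {f : E → G} {g : F → G} {u' : E ≃L[𝕂] F} {a : E}
    (hu : ContDiffAt 𝕂 n u a) (hu' : HasFDerivAt u (u' : E →L[𝕂] F) a) (hn : n ≠ 0)
    (hf : ContDiffAt 𝕂 n f a) (hgf : g ∘ u =ᶠ[𝓝 a] f) : ContDiffAt 𝕂 n g (u a) := by
  set v := hu.localInverse hu' hn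
  have hva : v (u a) = a := hu.localInverse_apply_image hu' hn
  have hv : ContDiffAt 𝕂 n v (u a) := hu.to_localInverse hu' hn
  have hv_tendsto : Tendsto v (𝓝 (u a)) (𝓝 a) := by
    simpa only [hva] using hv.continuousAt.tendsto
  have hgv : g =ᶠ[𝓝 (u a)] f ∘ v := by
    have hright : ∀ᶠ y in 𝓝 (u a), u (v y) = y :=
      (hu.hasStrictFDerivAt' hu' hn).eventually_right_inverse
    filter_upwards [hright, hv_tendsto.eventually hgf] with y hy hgfy
    rwa [Function.comp_apply, hy] at hgfy
  exact ((hva ▸ hf).comp (u a) hv).congr_of_eventuallyEq hgv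

theorem iteratedDeriv_id_div_zero {𝕜 : Type*} [NontriviallyNormedField 𝕜] {w : 𝕜 → 𝕜}
    (hw : ContDiffAt 𝕜 3 w 0) (hw0 : w 0 = 1) :
    deriv (fun x => x / w x) 0 = 1 ∧
      iteratedDeriv 2 (fun x => x / w x) 0 = -2 * deriv w 0 ∧
      iteratedDeriv 3 (fun x => x / w x) 0 = 6 * deriv w 0 ^ 2 - 3 * iteratedDeriv 2 w 0 := by
  set q : 𝕜 → 𝕜 := fun x => x / w x
  have hq : ContDiffAt 𝕜 3 q 0 := contDiffAt_id.div hw (by simp [hw0])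
  have hqw : q * w =ᶠ[𝓝 0] id := by
    filter_upwards [hw.continuousAt.eventually_ne (by simp [hw0] : w 0 ≠ 0)] with x hx
    simp [q, div_mul_cancel₀ _ hx]
  have leibniz (n : ℕ) (hn : n ≤ 3) : ∑ i ∈ Finset.range (n + 1),
      (n.choose i : 𝕜) * iteratedDeriv i q 0 * iteratedDeriv (n - i) w 0 = iteratedDeriv n id 0 := by
    rw [← iteratedDeriv_mul (hq.of_le (by exact_mod_cast hn)) (hw.of_le (by exact_mod_cast hn)),
      hqw.iteratedDeriv_eq]
  have e1 := leibniz 1 (by norm_num)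
  have e2 := leibniz 2 (by norm_num)
  have e3 := leibniz 3 (by norm_num)
  simp only [Nat.reduceAdd, Finset.sum_range_succ, Finset.range_one, Finset.sum_singleton,
    Nat.choose_succ_self_right, zero_add, Nat.cast_one, iteratedDeriv_zero, hw0, div_one, mul_zero,
    tsub_zero, iteratedDeriv_one, zero_mul, Nat.choose_self, one_mul, tsub_self, mul_one,
    iteratedDeriv_id, one_ne_zero, ↓reduceIte, Nat.choose_zero_right, Nat.cast_ofNat,
    Nat.add_one_sub_one, OfNat.ofNat_ne_zero, OfNat.ofNat_ne_one, Nat.choose_one_right,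
    Nat.reduceSub, q] at e1 e2 e3
  have hq2 : iteratedDeriv 2 q 0 = -2 * deriv w 0 := by linear_combination e2 - 2 * deriv w 0 * e1
  exact ⟨e1, hq2, by linear_combination e3 - 3 * iteratedDeriv 2 w 0 * e1 - 3 * deriv w 0 * hq2⟩

noncomputable def schaafExpr {𝕜 : Type*} [NontriviallyNormedField 𝕜] (g : 𝕜 → 𝕜) (x : 𝕜) : 𝕜 :=
  5 * iteratedDeriv 2 g x ^ 2 - 3 * deriv g x * iteratedDeriv 3 g x

theorem schaafExpr_zero_of_comp_eventuallyEq_id_div {𝕜 : Type*} [NontriviallyNormedField 𝕜]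
    {g u w : 𝕜 → 𝕜} (hg : ContDiffAt 𝕜 3 g 0) (hu : ContDiffAt 𝕜 3 u 0) (hw : ContDiffAt 𝕜 3 w 0)
    (hu0 : u 0 = 0) (hw0 : w 0 = 1) (hu' : deriv u =ᶠ[𝓝 0] w)
    (hgu : g ∘ u =ᶠ[𝓝 0] fun x => x / w x) :
    schaafExpr g 0 = 12 * iteratedDeriv 2 w 0 := by
  obtain ⟨q1, q2, q3⟩ := iteratedDeriv_id_div_zero hw hw0
  have u1 : deriv u 0 = 1 := hu'.eq_of_nhds.trans hw0
  have u2 : iteratedDeriv 2 u 0 = deriv w 0 := by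
    rw [iteratedDeriv_succ', iteratedDeriv_one, hu'.deriv_eq]
  have u3 : iteratedDeriv 3 u 0 = iteratedDeriv 2 w 0 := by
    rw [iteratedDeriv_succ', hu'.iteratedDeriv_eq]
  rw [← hu0] at hg
  have c1 := deriv_comp 0 (hg.differentiableAt (by norm_num)) (hu.differentiableAt (by norm_num))
  have c2 := iteratedDeriv_comp_two (hg.of_le (by norm_num)) (hu.of_le (by norm_num))
  have c3 := iteratedDeriv_comp_three hg hu
  rw [hgu.deriv_eq, q1, hu0, u1] at c1
  rw [hgu.iteratedDeriv_eq, q2, hu0, u1, u2] at c2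
  rw [hgu.iteratedDeriv_eq, q3, hu0, u1, u2, u3] at c3
  have g1 : deriv g 0 = 1 := by linear_combination -c1
  have g2 : iteratedDeriv 2 g 0 = -3 * deriv w 0 := by linear_combination -c2 - deriv w 0 * g1
  rw [schaafExpr, g1, g2]
  rw [g1, g2] at c3
  linear_combination 3 * c3

theorem urabe_schaaf_identity_general (h H gt : ℝ → ℝ) (hC3 : ContDiff ℝ 3 h)
    (ε : ℝ) (hε : 0 < ε) (h0 : h 0 = 0) (H0 : H 0 = 0)
    (hH : ∀ X : ℝ, HasDerivAt H (h X) X)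
    (hgt : ∀ X ∈ Set.Ioo (-ε) ε, gt (X + H X) = X / (1 + h X)) :
    5 * (iteratedDeriv 2 gt 0)^2 - 3 * (deriv gt 0) * (iteratedDeriv 3 gt 0)
      = 12 * iteratedDeriv 2 h 0 := by
  set u : ℝ → ℝ := fun X => X + H X
  set w : ℝ → ℝ := fun X => 1 + h X
  have hu' (X : ℝ) : HasDerivAt u (w X) X := (hasDerivAt_id X).add (hH X)
  have hw : ContDiff ℝ 3 w := contDiff_const.add hC3
  have hu : ContDiff ℝ 3 u := by
    rw [show (3 : WithTop ℕ∞) = 2 + 1 by norm_num, contDiff_succ_iff_deriv,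
      funext fun X => (hu' X).deriv]
    exact ⟨fun X => (hu' X).differentiableAt, by simp, hw.of_le (by norm_num)⟩
  have hu0 : u 0 = 0 := by simp [u, H0]
  have hw0 : w 0 = 1 := by simp [w, h0]
  have hgu : gt ∘ u =ᶠ[𝓝 0] fun X => X / w X :=
    eventually_of_mem (Ioo_mem_nhds (by linarith) hε) hgt
  have hgt3 : ContDiffAt ℝ 3 gt 0 := by
    simpa only [hu0] using contDiffAt_of_comp_eventuallyEq hu.contDiffAt
      ((hu' 0).hasFDerivAt_equiv (by simp [hw0])) (by norm_num)
      (contDiffAt_id.div hw.contDiffAt (by simp [hw0])) hgu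
  simpa only [schaafExpr, w, iteratedDeriv_const_add two_pos] using
    schaafExpr_zero_of_comp_eventuallyEq_id_div hgt3 hu.contDiffAt hw.contDiffAt hu0 hw0
      (.of_eq (funext fun X => (hu' X).deriv)) hgu

/-- With `g̃(u) = X/(1 + h(X))`, `u = X + H(X)`, `H' = h`, `h(0) = 0`, the Schaaf
expression at the center satisfies `5 g̃''(0)² - 3 g̃'(0) g̃'''(0) = 12 h''(0)`. -/
theorem urabe_schaaf_identity (h H gt : ℝ → ℝ) (hC3 : ContDiff ℝ 3 h)
    (ε : ℝ) (hε : 0 < ε) (h0 : h 0 = 0) (H0 : H 0 = 0)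
    (hH : ∀ X : ℝ, HasDerivAt H (h X) X)
    (hpos : ∀ X ∈ Set.Ioo (-ε) ε, 1 + h X > 0)
    (hgt : ∀ X ∈ Set.Ioo (-ε) ε, gt (X + H X) = X / (1 + h X)) :
    5 * (iteratedDeriv 2 gt 0)^2 - 3 * (deriv gt 0) * (iteratedDeriv 3 gt 0)
      = 12 * iteratedDeriv 2 h 0 :=
  urabe_schaaf_identity_general h H gt hC3 ε hε h0 H0 hH hgt
end

section
/- Let f, g be C³ near 0 with g(0) = 0, F(x) = ∫₀ˣ f(s) ds, and g̃(u) = g(x)e^(F(x)) where u = ∫₀ˣ e^(F(s)) ds. Then g̃'(0) = g'(0), g̃''(0) = g''(0) + f(0)g'(0), and if g'(0) = 1 then g̃'''(0) = g'''(0) + 2f'(0) − f(0)². -/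
/-!
Since `φ' = e^F` does not vanish, `φ` has a local inverse `ψ` near `0 = φ 0` with
`ψ' = e^(-F ∘ ψ)`, and `g̃ = (g e^F) ∘ ψ` there. By the chain rule, if `h` has `x`-derivative
`h'`, then `(h ∘ ψ)' = (h' e^(-F)) ∘ ψ`; applying this three times writes every `u`-derivative
of `g̃` as an explicit expression in `f`, `g` and their `x`-derivatives, composed with `ψ`.
Evaluating at `ψ 0 = 0`, where `F 0 = 0` and `g 0 = 0`, gives the formulas.
-/

open Topology Filter Real

theorem hasDerivAt_integral_of_continuousOn {E : Type*} [NormedAddCommGroup E]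
    [NormedSpace ℝ E] [CompleteSpace E] {f : ℝ → E} {s : Set ℝ} {a x : ℝ} (hs : IsOpen s)
    [s.OrdConnected] (hf : ContinuousOn f s) (ha : a ∈ s) (hx : x ∈ s) :
    HasDerivAt (fun y => ∫ t in a..y, f t) (f x) x :=
  intervalIntegral.integral_hasDerivAt_right
    ((hf.mono (Set.OrdConnected.uIcc_subset ‹_› ha hx)).intervalIntegrable)
    (hf.stronglyMeasurableAtFilter hs x hx) (hf.continuousAt (hs.mem_nhds hx))

theorem ContDiffOn.hasDerivAt_iteratedDeriv {𝕜 E : Type*} [NontriviallyNormedField 𝕜]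
    [NormedAddCommGroup E] [NormedSpace 𝕜 E] {f : 𝕜 → E} {s : Set 𝕜} {n k : ℕ} {x : 𝕜}
    (hf : ContDiffOn 𝕜 n f s) (hs : IsOpen s) (hk : k < n) (hx : x ∈ s) :
    HasDerivAt (iteratedDeriv k f) (iteratedDeriv (k + 1) f x) x := by
  have hdiff : DifferentiableOn 𝕜 (iteratedDeriv k f) s :=
    (hf.differentiableOn_iteratedDerivWithin (by exact_mod_cast hk) hs.uniqueDiffOn).congr
      fun y hy => (iteratedDerivWithin_of_isOpen hs hy).symm
  rw [iteratedDeriv_succ]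
  exact (hdiff.differentiableAt (hs.mem_nhds hx)).hasDerivAt

theorem exists_localInverse_hasDerivAt {𝕜 : Type*} [RCLike 𝕜] {φ φ' : 𝕜 → 𝕜} {a : 𝕜}
    (hφ : ∀ᶠ x in 𝓝 a, HasDerivAt φ (φ' x) x ∧ φ' x ≠ 0) (hφ' : ContinuousAt φ' a) :
    ∃ ψ : 𝕜 → 𝕜, ψ (φ a) = a ∧ Tendsto ψ (𝓝 (φ a)) (𝓝 a) ∧
      ∀ᶠ u in 𝓝 (φ a), φ (ψ u) = u ∧ HasDerivAt ψ (φ' (ψ u))⁻¹ u := by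
  have hstrict : HasStrictDerivAt φ (φ' a) a :=
    hasStrictDerivAt_of_hasDerivAt_of_continuousAt (hφ.mono fun _ h => h.1) hφ'
  set e := (hstrict.hasStrictFDerivAt_equiv hφ.self_of_nhds.2).toOpenPartialHomeomorph φ
  have hsource : a ∈ e.source := HasStrictFDerivAt.mem_toOpenPartialHomeomorph_source _
  have htarget : φ a ∈ e.target := e.map_source hsource
  have htendsto : Tendsto e.symm (𝓝 (φ a)) (𝓝 a) := e.tendsto_symm hsource
  refine ⟨e.symm, e.left_inv hsource, htendsto, ?_⟩
  filter_upwards [e.open_target.mem_nhds htarget, htendsto.eventually hφ] with u hu hψu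
  exact ⟨e.right_inv hu, e.hasDerivAt_symm hu hψu.2 hψu.1⟩

theorem exists_localInverse_of_hasDerivAt_exp {F f φ : ℝ → ℝ} {s : Set ℝ} (hs : s ∈ 𝓝 0)
    (hF : ∀ x ∈ s, HasDerivAt F (f x) x) (hφ : ∀ x ∈ s, HasDerivAt φ (exp (F x)) x)
    (hφ0 : φ 0 = 0) :
    ∃ ψ : ℝ → ℝ, ψ 0 = 0 ∧
      ∀ᶠ u in 𝓝 0, ψ u ∈ s ∧ φ (ψ u) = u ∧ HasDerivAt ψ (exp (-F (ψ u))) u := by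
  obtain ⟨ψ, hψ0, hψtendsto, hψ⟩ := exists_localInverse_hasDerivAt (φ' := fun x => exp (F x))
    (mem_of_superset hs fun x hx => ⟨hφ x hx, (exp_pos _).ne'⟩)
    (hF 0 (mem_of_mem_nhds hs)).continuousAt.rexp
  rw [hφ0] at hψ0 hψtendsto hψ
  refine ⟨ψ, hψ0, ?_⟩
  filter_upwards [hψtendsto hs, hψ] with u hus hu
  exact ⟨hus, hu.1, by simpa only [exp_neg] using hu.2⟩

theorem iteratedDeriv_succ_eventuallyEq_comp {𝕜 : Type*} [NontriviallyNormedField 𝕜]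
    {f ψ w h h' : 𝕜 → 𝕜} {s : Set 𝕜} {a : 𝕜} {k : ℕ}
    (hψs : ∀ᶠ u in 𝓝 a, ψ u ∈ s) (hψ : ∀ᶠ u in 𝓝 a, HasDerivAt ψ (w (ψ u)) u)
    (hh : ∀ x ∈ s, HasDerivAt h (h' x) x) (hk : iteratedDeriv k f =ᶠ[𝓝 a] h ∘ ψ) :
    iteratedDeriv (k + 1) f =ᶠ[𝓝 a] (fun x => h' x * w x) ∘ ψ := by
  rw [iteratedDeriv_succ]
  refine hk.deriv.trans ?_
  filter_upwards [hψs, hψ] with u hu hψu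
  exact ((hh _ hu).comp u hψu).deriv

open intervalIntegral in
/-- Corollary 2-10: with `F(x) = ∫₀ˣ f`, `u = ∫₀ˣ e^(F(s)) ds` and
`g̃(u) = g(x)·e^(F(x))`, one has `g̃'(0) = g'(0)`,
`g̃''(0) = g''(0) + f(0)·g'(0)`, and, when `g'(0) = 1`,
`g̃'''(0) = g'''(0) + 2f'(0) - f(0)²`. -/
theorem gtilde_derivatives_at_zero (f g : ℝ → ℝ) (ε : ℝ) (hε : 0 < ε)
    (hf : ContDiffOn ℝ 3 f (Set.Ioo (-ε) ε)) (hg : ContDiffOn ℝ 3 g (Set.Ioo (-ε) ε))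
    (hg0 : g 0 = 0)
    (F : ℝ → ℝ) (hF : ∀ y : ℝ, F y = ∫ s in (0:ℝ)..y, f s)
    (φ : ℝ → ℝ) (hφ : ∀ y : ℝ, φ y = ∫ s in (0:ℝ)..y, Real.exp (F s))
    (gt : ℝ → ℝ) (hgt : ∀ y ∈ Set.Ioo (-ε) ε, gt (φ y) = g y * Real.exp (F y)) :
    deriv gt 0 = deriv g 0 ∧
    iteratedDeriv 2 gt 0 = iteratedDeriv 2 g 0 + f 0 * deriv g 0 ∧
    (deriv g 0 = 1 →
      iteratedDeriv 3 gt 0 = iteratedDeriv 3 g 0 + 2 * deriv f 0 - (f 0)^2) := by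
  set s := Set.Ioo (-ε) ε
  have hs : IsOpen s := isOpen_Ioo
  have h0 : (0 : ℝ) ∈ s := ⟨neg_lt_zero.2 hε, hε⟩
  have hFd : ∀ x ∈ s, HasDerivAt F (f x) x := by
    rw [funext hF]
    exact fun x hx => hasDerivAt_integral_of_continuousOn hs hf.continuousOn h0 hx
  have hφd : ∀ x ∈ s, HasDerivAt φ (exp (F x)) x := by
    rw [funext hφ]
    exact fun x hx => hasDerivAt_integral_of_continuousOn hs
      (fun y hy => (hFd y hy).continuousAt.continuousWithinAt.rexp) h0 hx
  have hF0 : F 0 = 0 := by simp [hF]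
  have hφ0 : φ 0 = 0 := by simp [hφ]
  obtain ⟨ψ, hψ0, hψ⟩ := exists_localInverse_of_hasDerivAt_exp (hs.mem_nhds h0) hFd hφd hφ0
  have hψs : ∀ᶠ u in 𝓝 0, ψ u ∈ s := hψ.mono fun _ hu => hu.1
  have hψd : ∀ᶠ u in 𝓝 0, HasDerivAt ψ (exp (-F (ψ u))) u := hψ.mono fun _ hu => hu.2.2
  have hg1 : ∀ x ∈ s, HasDerivAt g (deriv g x) x := fun x hx => by
    simpa using hg.hasDerivAt_iteratedDeriv (n := 3) (k := 0) hs (by norm_num) hx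
  have hg2 : ∀ x ∈ s, HasDerivAt (deriv g) (iteratedDeriv 2 g x) x := fun x hx => by
    simpa using hg.hasDerivAt_iteratedDeriv (n := 3) (k := 1) hs (by norm_num) hx
  have hg3 : ∀ x ∈ s, HasDerivAt (iteratedDeriv 2 g) (iteratedDeriv 3 g x) x :=
    fun x hx => hg.hasDerivAt_iteratedDeriv (n := 3) (k := 2) hs (by norm_num) hx
  have hf1 : ∀ x ∈ s, HasDerivAt f (deriv f x) x := fun x hx => by
    simpa using hf.hasDerivAt_iteratedDeriv (n := 3) (k := 0) hs (by norm_num) hx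
  have hf2 : ∀ x ∈ s, HasDerivAt (deriv f) (iteratedDeriv 2 f x) x := fun x hx => by
    simpa using hf.hasDerivAt_iteratedDeriv (n := 3) (k := 1) hs (by norm_num) hx
  have hgt₀ : iteratedDeriv 0 gt =ᶠ[𝓝 0] (fun x => g x * exp (F x)) ∘ ψ := by
    filter_upwards [hψ] with u hu
    rw [iteratedDeriv_zero, Function.comp_apply, ← hgt _ hu.1, hu.2.1]
  have hgt₁ : iteratedDeriv 1 gt =ᶠ[𝓝 0] (fun x => deriv g x + f x * g x) ∘ ψ := by
    refine (iteratedDeriv_succ_eventuallyEq_comp (w := fun x => exp (-F x)) hψs hψd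
      (fun x hx => (hg1 x hx).mul (hFd x hx).exp) hgt₀).trans
      (EventuallyEq.of_eq (funext fun u => ?_))
    simp only [Function.comp_apply, exp_neg]
    field_simp
  have hgt₂ : iteratedDeriv 2 gt =ᶠ[𝓝 0] (fun x =>
      (iteratedDeriv 2 g x + (deriv f x * g x + f x * deriv g x)) * exp (-F x)) ∘ ψ :=
    iteratedDeriv_succ_eventuallyEq_comp hψs hψd
      (fun x hx => (hg2 x hx).add ((hf1 x hx).mul (hg1 x hx))) hgt₁
  have hgt₃ := iteratedDeriv_succ_eventuallyEq_comp (k := 2) (w := fun x => exp (-F x)) hψs hψd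
    (fun x hx => ((hg3 x hx).add (((hf2 x hx).mul (hg1 x hx)).add
      ((hf1 x hx).mul (hg2 x hx)))).mul (hFd x hx).neg.exp) hgt₂
  refine ⟨?_, ?_, fun hg'0 => ?_⟩
  · simpa [hψ0, hg0] using hgt₁.self_of_nhds
  · simpa [hψ0, hg0, hF0] using hgt₂.self_of_nhds
  · have h3 := hgt₃.self_of_nhds
    simp only [Pi.neg_apply, Pi.add_apply, Pi.mul_apply, Function.comp_apply, hψ0, hg0, hF0,
      hg'0, neg_zero, exp_zero] at h3
    linear_combination h3
end

section
/- For f(x) = 5a₆x/(3 − a₆x²) and g(x) = (x − (2/9)a₆x³)(1 − (a₆/3)x²), the identity f(x)g(x) + g'(x) = 1 holds for all x with 3 − a₆x² ≠ 0. -/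
/-!
With `g'` computed by the product rule, multiplying the identity by `3 - a₆x²` turns it into a
polynomial identity `5a₆x·g + (3 - a₆x²)·g' = 3 - a₆x²`, which holds coefficientwise.
-/

theorem div_mul_add_eq_one_of_mul_add_mul_eq {K : Type*} [Field K] {n d g g' : K} (hd : d ≠ 0)
    (h : n * g + d * g' = d) : n / d * g + g' = 1 := by
  field_simp
  linear_combination h

theorem hasDerivAt_cubicCaseI_g (a₆ x : ℝ) :
    HasDerivAt (fun y => (y - (2/9) * a₆ * y^3) * (1 - (a₆/3) * y^2))
      ((1 - (2/3) * a₆ * x^2) * (1 - (a₆/3) * x^2) - (2/3) * a₆ * x * (x - (2/9) * a₆ * x^3)) x := by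
  refine HasDerivAt.congr_deriv
    (((hasDerivAt_id' x).sub ((hasDerivAt_pow 3 x).const_mul ((2/9) * a₆))).mul
      (((hasDerivAt_pow 2 x).const_mul (a₆/3)).const_sub 1)) ?_
  norm_num
  ring

theorem cubicCaseI_isochronicity_cleared (a₆ x : ℝ) :
    5 * a₆ * x * ((x - (2/9) * a₆ * x^3) * (1 - (a₆/3) * x^2)) +
      (3 - a₆ * x^2) * ((1 - (2/3) * a₆ * x^2) * (1 - (a₆/3) * x^2)
        - (2/3) * a₆ * x * (x - (2/9) * a₆ * x^3)) = 3 - a₆ * x^2 := by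
  ring

/-- For `f(x) = 5a₆x/(3 - a₆x²)` and `g(x) = (x - (2/9)a₆x³)(1 - (a₆/3)x²)`,
the isochronicity identity `f·g + g' = 1` holds wherever `3 - a₆x² ≠ 0`. -/
theorem cubic_case_I_isochronicity (a₆ : ℝ) :
    ∀ x : ℝ, 3 - a₆ * x^2 ≠ 0 →
      (5 * a₆ * x / (3 - a₆ * x^2)) *
        ((x - (2/9) * a₆ * x^3) * (1 - (a₆/3) * x^2)) +
      deriv (fun y => (y - (2/9) * a₆ * y^3) * (1 - (a₆/3) * y^2)) x = 1 := by
  intro x hx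
  rw [(hasDerivAt_cubicCaseI_g a₆ x).deriv]
  exact div_mul_add_eq_one_of_mul_add_mul_eq hx (cubicCaseI_isochronicity_cleared a₆ x)
end
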